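/- arXiv:2310.08356 — 3 statements merged into one kernel-verified Lean document; each statement's English description precedes it below -/
import Mathlib

section
/- Let A₀ be a symmetric positive definite p×p matrix, f' a p×p matrix with A₀·f' symmetric, and M'₁,…,M'ₖ p×p matrices with each A₀·M'ᵢ symmetric positive definite and ∑ᵢ M'ᵢ = I. Let a₁,…,aₖ be reals with minᵢ|aᵢ| > ρ(f'). Then the matrix K = A₀·(∑ᵢ aᵢ²·M'ᵢ − (f')²) is symmetric positive definite. -/
/-!
Put `r = ρ(f')`. Since `∑ M'ᵢ = 1`, `K = ∑ᵢ (aᵢ² - r²) A₀ M'ᵢ + (r² A₀ - A₀ f'²)`. The sum is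
positive definite: its weights `aᵢ² - r²` are positive and its unweighted version is `A₀`.
For the remainder let `S = A₀^{1/2}`: the matrix `B = S f' S⁻¹ = S⁻¹ (A₀ f') S⁻¹` is symmetric
and similar to `f'`, so its eigenvalues lie in `[-r, r]`, and `r² A₀ - A₀ f'² = S (r² - B²) S`
is positive semidefinite.
-/

open Matrix
open scoped MatrixOrder

theorem Matrix.posDef_sum_smul {n ι : Type*} [Fintype n] (s : Finset ι) {P : ι → Matrix n n ℝ}
    {c : ι → ℝ} (hc : ∀ i ∈ s, 0 < c i) (hP : ∀ i ∈ s, (P i).PosSemidef)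
    (hsum : (∑ i ∈ s, P i).PosDef) : (∑ i ∈ s, c i • P i).PosDef := by
  have hpsd : (∑ i ∈ s, c i • P i).PosSemidef :=
    posSemidef_sum s fun i hi => (hP i hi).smul (hc i hi).le
  refine .of_dotProduct_mulVec_pos hpsd.isHermitian fun x hx => ?_
  have hpos := hsum.dotProduct_mulVec_pos hx
  simp only [sum_mulVec, dotProduct_sum, smul_mulVec, dotProduct_smul, smul_eq_mul] at hpos ⊢
  obtain ⟨i, hi, hxi⟩ := Finset.exists_lt_of_sum_lt (f := 0) (g := fun i => x ⬝ᵥ P i *ᵥ x)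
    (by simpa using hpos)
  exact Finset.sum_pos'
    (fun j hj => mul_nonneg (hc j hj).le ((hP j hj).dotProduct_mulVec_nonneg x))
    ⟨i, hi, mul_pos (hc i hi) hxi⟩

variable {n : Type*} [Fintype n] [DecidableEq n]

theorem Matrix.map_mem_spectrum_map {K L : Type*} [Field K] [Field L] (φ : K →+* L)
    {A : Matrix n n K} {μ : K} (hμ : μ ∈ spectrum K A) : φ μ ∈ spectrum L (A.map φ) := by
  rw [mem_spectrum_iff_isRoot_charpoly] at hμ ⊢
  rw [charpoly_map]
  exact hμ.map

theorem Matrix.spectralRadius_ne_top {𝕜 : Type*} [NormedField 𝕜] (A : Matrix n n 𝕜) :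
    spectralRadius 𝕜 A ≠ ⊤ := by
  have hfin := A.finite_spectrum
  refine ne_top_of_le_ne_top (ENNReal.coe_ne_top (r := hfin.toFinset.sup (‖·‖₊)))
    (iSup₂_le fun k hk => ?_)
  exact ENNReal.coe_le_coe.2 (Finset.le_sup (f := (‖·‖₊)) (hfin.mem_toFinset.2 hk))

theorem Matrix.abs_le_toReal_spectralRadius_map {A : Matrix n n ℝ} {μ : ℝ}
    (hμ : μ ∈ spectrum ℝ A) : |μ| ≤ (spectralRadius ℂ (A.map (algebraMap ℝ ℂ))).toReal := by
  have hμC : (μ : ℂ) ∈ spectrum ℂ (A.map (algebraMap ℝ ℂ)) := map_mem_spectrum_map _ hμ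
  have := ENNReal.toReal_mono (spectralRadius_ne_top _)
    (le_iSup₂ (f := fun k (_ : k ∈ spectrum ℂ _) => (‖k‖₊ : ENNReal)) _ hμC)
  simpa using this

theorem Matrix.IsHermitian.posSemidef_sq_smul_one_sub_sq {B : Matrix n n ℝ} (hB : B.IsHermitian)
    {r : ℝ} (hr : ∀ μ ∈ spectrum ℝ B, |μ| ≤ r) : (r ^ 2 • 1 - B ^ 2).PosSemidef := by
  have hcfc : cfc (fun x : ℝ => r ^ 2 - x ^ 2) B = r ^ 2 • 1 - B ^ 2 := by
    rw [cfc_sub .., cfc_const .., cfc_pow_id .., Algebra.algebraMap_eq_smul_one]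
  rw [← hcfc, ← nonneg_iff_posSemidef]
  exact cfc_nonneg fun x hx => sub_nonneg.2 (sq_le_sq.2 ((hr x hx).trans (le_abs_self r)))

theorem Matrix.PosDef.posSemidef_sq_smul_sub_mul_sq {A f : Matrix n n ℝ} (hA : A.PosDef)
    (hAf : (A * f).IsSymm) {r : ℝ} (hr : ∀ μ ∈ spectrum ℝ f, |μ| ≤ r) :
    (r ^ 2 • A - A * f ^ 2).PosSemidef := by
  obtain ⟨S, hS⟩ : IsUnit (CFC.sqrt A) :=
    (CFC.isUnit_sqrt_iff A hA.posSemidef.nonneg).2 hA.isUnit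
  have hSS : (S : Matrix n n ℝ) * S = A := hS ▸ CFC.sqrt_mul_sqrt_self A hA.posSemidef.nonneg
  have hSH : (S : Matrix n n ℝ)ᴴ = S := hS ▸ (CFC.sqrt_nonneg A).posSemidef.isHermitian
  set S' : Matrix n n ℝ := ↑S⁻¹
  set B : Matrix n n ℝ := S * f * S'
  have hB : B.IsHermitian := by
    have hB' : B = S'ᴴ * (A * f) * S' := by
      have hSstar : star S = S := Units.ext hSH
      rw [← hSS, ← star_eq_conjTranspose, ← Units.coe_star_inv, hSstar]
      simp [B, S', mul_assoc]
    exact hB' ▸ isHermitian_conjTranspose_mul_mul _ hAf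
  have hBr : ∀ μ ∈ spectrum ℝ B, |μ| ≤ r := spectrum.units_conjugate (R := ℝ) (a := f) ▸ hr
  have hconj : r ^ 2 • A - A * f ^ 2 = (S : Matrix n n ℝ)ᴴ * (r ^ 2 • 1 - B ^ 2) * S := by
    rw [hSH, ← hSS]
    simp [B, S', sq, mul_assoc, mul_sub, sub_mul]
  rw [hconj]
  exact (hB.posSemidef_sq_smul_one_sub_sq hBr).conjTranspose_mul_mul_same _

/-- Proposition 1: with `A₀` symmetric positive definite, `A₀ * f'` symmetric,
monotone Maxwellians (`A₀ * M' i` symmetric positive definite, `∑ i, M' i = I`),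
and the sub-characteristic condition `ρ(f') < minᵢ |aᵢ|`, the matrix
`K = A₀ * (∑ᵢ aᵢ² • M'ᵢ - (f')²)` is symmetric positive definite. -/
theorem stmt4 (p k : ℕ) (A₀ f' : Matrix (Fin p) (Fin p) ℝ)
    (M' : Fin k → Matrix (Fin p) (Fin p) ℝ) (a : Fin k → ℝ)
    (hA : A₀.PosDef) (hAf : (A₀ * f').IsSymm)
    (hM : ∀ i, (A₀ * M' i).PosDef)
    (hsum : ∑ i, M' i = 1)
    (hsub : ∀ i, (spectralRadius ℂ (f'.map (algebraMap ℝ ℂ))).toReal < |a i|) :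
    (A₀ * (∑ i, (a i) ^ 2 • M' i - f' ^ 2)).PosDef := by
  set r := (spectralRadius ℂ (f'.map (algebraMap ℝ ℂ))).toReal
  have hgap : ∀ i, 0 < a i ^ 2 - r ^ 2 := fun i =>
    sub_pos.2 (sq_lt_sq.2 ((abs_of_nonneg ENNReal.toReal_nonneg).trans_lt (hsub i)))
  have hsumA : ∑ i, A₀ * M' i = A₀ := by rw [← Finset.mul_sum, hsum, Matrix.mul_one]
  have hsplit : A₀ * (∑ i, (a i) ^ 2 • M' i - f' ^ 2)
      = ∑ i, (a i ^ 2 - r ^ 2) • (A₀ * M' i) + (r ^ 2 • A₀ - A₀ * f' ^ 2) := by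
    simp only [Matrix.mul_sub, Finset.mul_sum, Matrix.mul_smul, sub_smul, Finset.sum_sub_distrib,
      ← Finset.smul_sum, hsumA]
    abel
  rw [hsplit]
  refine .add_posSemidef ?_
    (hA.posSemidef_sq_smul_sub_mul_sq hAf fun _ => abs_le_toReal_spectralRadius_map)
  exact posDef_sum_smul _ (fun i _ => hgap i) (fun i _ => (hM i).posSemidef) (by rwa [hsumA])
end

section
/- Under the hypotheses of Proposition 1 (A₀ symmetric positive definite, A₀·f' symmetric, each A₀·M'ᵢ symmetric positive definite with ∑ᵢ M'ᵢ = I, and minᵢ|aᵢ| > ρ(f')), the matrix m₂' − (f')², where m₂' = ∑ᵢ aᵢ²·M'ᵢ, has real strictly positive eigenvalues and is invertible. -/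
/-!
With `K = A₀ (m₂' - f'²)`, the matrix `m₂' - f'²` equals `A₀⁻¹ K`, so an eigenvector `v` for `μ`
gives `v* K v = μ · v* A₀ v`; hence `μ > 0` as soon as `K` is positive definite. Conjugating by
`B = A₀^{1/2}` turns `f'` into the Hermitian matrix `G = B f' B⁻¹` with the same spectrum, so
`r² A₀ - A₀ f'² = B (r² - G²) B ≥ 0` for `r = ρ(f')`. Writing `A₀ = ∑ᵢ A₀ M'ᵢ`,
`K = ∑ᵢ (aᵢ² - r²) A₀ M'ᵢ + (r² A₀ - A₀ f'²)` is then positive definite because `|aᵢ| > r`.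
-/

open Matrix
open scoped MatrixOrder ComplexOrder

namespace Matrix

variable {n : Type*} [Fintype n] [DecidableEq n] {𝕜 : Type*} [RCLike 𝕜]

lemma PosDef.isUnit_sqrt {A : Matrix n n 𝕜} (hA : A.PosDef) : IsUnit (CFC.sqrt A) :=
  (CFC.isUnit_sqrt_iff A hA.posSemidef.nonneg).mpr hA.isUnit

lemma IsHermitian.sq_le_algebraMap {G : Matrix n n 𝕜} (hG : G.IsHermitian) {r : ℝ}
    (hr : ∀ x ∈ spectrum ℝ G, |x| ≤ r) : G ^ 2 ≤ algebraMap ℝ _ (r ^ 2) := by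
  rw [← cfc_pow_id (R := ℝ) G 2 hG.isSelfAdjoint,
    cfc_le_algebraMap_iff _ _ _ (by fun_prop) hG.isSelfAdjoint]
  exact fun x hx => sq_le_sq' (abs_le.mp (hr x hx)).1 (abs_le.mp (hr x hx)).2

lemma PosDef.isHermitian_sqrt_mul_mul_inv_sqrt {A f : Matrix n n 𝕜} (hA : A.PosDef)
    (hAf : (A * f).IsHermitian) : (CFC.sqrt A * f * (CFC.sqrt A)⁻¹).IsHermitian := by
  set B := CFC.sqrt A
  have hB : Bᴴ = B := (CFC.sqrt_nonneg A).posSemidef.isHermitian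
  have hBB : B * B = A := CFC.sqrt_mul_sqrt_self A hA.posSemidef.nonneg
  have hBd : IsUnit B.det := (isUnit_iff_isUnit_det B).mp hA.isUnit_sqrt
  have hfA : fᴴ * A = A * f := by simpa [hA.isHermitian.eq] using hAf.eq
  calc (B * f * B⁻¹)ᴴ = B⁻¹ * (fᴴ * (B * B)) * B⁻¹ := by
        rw [conjTranspose_mul, conjTranspose_mul, conjTranspose_nonsing_inv, hB]
        simp only [← Matrix.mul_assoc, mul_nonsing_inv_cancel_right _ _ hBd]
    _ = B⁻¹ * (B * B * f) * B⁻¹ := by rw [hBB, hfA]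
    _ = B * f * B⁻¹ := by simp only [← Matrix.mul_assoc, nonsing_inv_mul _ hBd, Matrix.one_mul]

lemma PosDef.posSemidef_sq_smul_sub_mul_sq_s5 {A f : Matrix n n 𝕜} (hA : A.PosDef)
    (hAf : (A * f).IsHermitian) {r : ℝ} (hr : ∀ x ∈ spectrum 𝕜 f, ‖x‖ ≤ r) :
    (r ^ 2 • A - A * f ^ 2).PosSemidef := by
  set B := CFC.sqrt A
  have hB : Bᴴ = B := (CFC.sqrt_nonneg A).posSemidef.isHermitian
  have hBB : B * B = A := CFC.sqrt_mul_sqrt_self A hA.posSemidef.nonneg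
  have hBu : IsUnit B := hA.isUnit_sqrt
  have hBd : IsUnit B.det := (isUnit_iff_isUnit_det B).mp hBu
  set G := B * f * B⁻¹
  have hG : G.IsHermitian := hA.isHermitian_sqrt_mul_mul_inv_sqrt hAf
  have hG_spec : ∀ x ∈ spectrum ℝ G, |x| ≤ r := fun x hx => by
    have hx𝕜 := spectrum.algebraMap_mem 𝕜 hx
    have hGf : G = (hBu.unit : Matrix n n 𝕜) * f *
        ((hBu.unit⁻¹ : (Matrix n n 𝕜)ˣ) : Matrix n n 𝕜) := by
      rw [coe_units_inv, hBu.unit_spec]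
    rw [hGf, spectrum.units_conjugate] at hx𝕜
    simpa using hr _ hx𝕜
  have hsq : 0 ≤ algebraMap ℝ (Matrix n n 𝕜) (r ^ 2) - G ^ 2 :=
    sub_nonneg.mpr (hG.sq_le_algebraMap hG_spec)
  have hconj : r ^ 2 • A - A * f ^ 2 = Bᴴ * (algebraMap ℝ _ (r ^ 2) - G ^ 2) * B := by
    have hGsq : B * G ^ 2 * B = A * f ^ 2 := by
      simp only [G, sq, ← Matrix.mul_assoc, nonsing_inv_mul_cancel_right _ _ hBd, hBB]
    rw [hB, Matrix.mul_sub, Matrix.sub_mul, hGsq, Algebra.algebraMap_eq_smul_one, Matrix.mul_smul,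
      Matrix.mul_one, Matrix.smul_mul, hBB]
  rw [hconj]
  exact hsq.posSemidef.conjTranspose_mul_mul_same B

lemma PosDef.posDef_mul_sum_sq_smul_sub_sq {ι : Type*} [Fintype ι] {A f : Matrix n n 𝕜}
    {M : ι → Matrix n n 𝕜} {a : ι → ℝ} {r : ℝ} (hA : A.PosDef) (hAf : (A * f).IsHermitian)
    (hM : ∀ i, (A * M i).PosDef) (hsum : ∑ i, M i = 1)
    (hr : ∀ x ∈ spectrum 𝕜 f, ‖x‖ ≤ r) (ha : ∀ i, r ^ 2 < a i ^ 2) :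
    (A * (∑ i, a i ^ 2 • M i - f ^ 2)).PosDef := by
  have hA_sum : ∑ i, A * M i = A := by rw [← Finset.mul_sum, hsum, Matrix.mul_one]
  have hsplit : A * (∑ i, a i ^ 2 • M i - f ^ 2)
      = ∑ i, (a i ^ 2 - r ^ 2) • (A * M i) + (r ^ 2 • A - A * f ^ 2) := by
    rw [Matrix.mul_sub, Finset.mul_sum]
    simp only [Matrix.mul_smul, sub_smul, Finset.sum_sub_distrib, ← Finset.smul_sum, hA_sum]
    abel
  have hgap : (∑ i, (a i ^ 2 - r ^ 2) • (A * M i)).PosDef := by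
    rcases isEmpty_or_nonempty ι with hι | hι
    · have hA0 : A = 0 := by simpa using hA_sum.symm
      simpa [hA0] using hA
    · exact posDef_sum Finset.univ_nonempty fun i _ => (hM i).smul (sub_pos.mpr (ha i))
  rw [hsplit]
  exact hgap.add_posSemidef (hA.posSemidef_sq_smul_sub_mul_sq_s5 hAf hr)

lemma pos_of_mem_spectrum_of_posDef_mul {A S : Matrix n n 𝕜} (hA : A.PosDef)
    (hAS : (A * S).PosDef) {μ : 𝕜} (hμ : μ ∈ spectrum 𝕜 S) : 0 < μ := by
  rw [← spectrum_toLin', ← Module.End.hasEigenvalue_iff_mem_spectrum] at hμ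
  obtain ⟨v, hv, hv₀⟩ : ∃ v, S *ᵥ v = μ • v ∧ v ≠ 0 := by
    simpa [Module.End.hasEigenvector_iff] using hμ.exists_hasEigenvector
  have hK := hAS.dotProduct_mulVec_pos hv₀
  rw [← mulVec_mulVec, hv, mulVec_smul, dotProduct_smul, smul_eq_mul] at hK
  exact (pos_iff_pos_of_mul_pos hK).mpr (hA.dotProduct_mulVec_pos hv₀)

lemma PosDef.map_algebraMap {M : Matrix n n ℝ} (hM : M.PosDef) :
    (M.map (algebraMap ℝ 𝕜)).PosDef := by
  set B := CFC.sqrt M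
  have hB : Bᴴ = B := (CFC.sqrt_nonneg M).posSemidef.isHermitian
  have hstar : Function.Semiconj (algebraMap ℝ 𝕜) star star := fun x => by simp
  have hM_eq : M.map (algebraMap ℝ 𝕜) = (B.map (algebraMap ℝ 𝕜))ᴴ * B.map (algebraMap ℝ 𝕜) := by
    rw [← conjTranspose_map _ hstar, hB, ← Matrix.map_mul,
      CFC.sqrt_mul_sqrt_self M hM.posSemidef.nonneg]
  rw [hM_eq]
  exact PosDef.conjTranspose_mul_self _ <| mulVec_injective_iff_isUnit.mpr <|
    hM.isUnit_sqrt.map (algebraMap ℝ 𝕜).mapMatrix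

lemma ofReal_mem_spectrum_map {M : Matrix n n ℝ} {x : ℝ} (hx : x ∈ spectrum ℝ M) :
    (x : ℂ) ∈ spectrum ℂ (M.map (algebraMap ℝ ℂ)) := by
  rw [mem_spectrum_iff_isRoot_charpoly] at hx ⊢
  rw [charpoly_map]
  exact hx.map

lemma norm_le_toReal_spectralRadius {M : Matrix n n 𝕜} {x : 𝕜} (hx : x ∈ spectrum 𝕜 M) :
    ‖x‖ ≤ (spectralRadius 𝕜 M).toReal := by
  have hfin : spectralRadius 𝕜 M ≠ ⊤ := by
    obtain ⟨C, hC⟩ := ((Matrix.finite_spectrum M).image (‖·‖₊)).bddAbove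
    exact ne_top_of_le_ne_top ENNReal.coe_ne_top <|
      iSup₂_le fun k hk => ENNReal.coe_le_coe.2 (hC ⟨k, hk, rfl⟩)
  have hle : (‖x‖₊ : ENNReal) ≤ spectralRadius 𝕜 M :=
    le_iSup₂ (f := fun k (_ : k ∈ spectrum 𝕜 M) => (‖k‖₊ : ENNReal)) x hx
  simpa using ENNReal.toReal_mono hfin hle

end Matrix

/-- Corollary to Proposition 1: under the same hypotheses, the matrix
`m₂' - (f')²` with `m₂' = ∑ᵢ aᵢ² • M'ᵢ` has real strictly positive eigenvalues
and is invertible. -/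
theorem stmt5 (p k : ℕ) (A₀ f' : Matrix (Fin p) (Fin p) ℝ)
    (M' : Fin k → Matrix (Fin p) (Fin p) ℝ) (a : Fin k → ℝ)
    (hA : A₀.PosDef) (hAf : (A₀ * f').IsSymm)
    (hM : ∀ i, (A₀ * M' i).PosDef)
    (hsum : ∑ i, M' i = 1)
    (hsub : ∀ i, (spectralRadius ℂ (f'.map (algebraMap ℝ ℂ))).toReal < |a i|) :
    (∀ μ ∈ spectrum ℂ ((∑ i, (a i) ^ 2 • M' i - f' ^ 2).map (algebraMap ℝ ℂ)),
        μ.im = 0 ∧ 0 < μ.re) ∧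
    IsUnit (∑ i, (a i) ^ 2 • M' i - f' ^ 2) := by
  have hr : ∀ x ∈ spectrum ℝ f', ‖x‖ ≤ (spectralRadius ℂ (f'.map (algebraMap ℝ ℂ))).toReal :=
    fun x hx => by simpa using norm_le_toReal_spectralRadius (ofReal_mem_spectrum_map hx)
  have hK : (A₀ * (∑ i, a i ^ 2 • M' i - f' ^ 2)).PosDef :=
    hA.posDef_mul_sum_sq_smul_sub_sq (isHermitian_iff_isSymm.mpr hAf) hM hsum hr fun i => by
      simpa only [sq_abs] using pow_lt_pow_left₀ (hsub i) ENNReal.toReal_nonneg two_ne_zero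
  have hKℂ := hK.map_algebraMap (𝕜 := ℂ)
  rw [Matrix.map_mul] at hKℂ
  refine ⟨fun μ hμ => ?_, isUnit_of_mul_isUnit_right hK.isUnit⟩
  obtain ⟨hre, him⟩ :=
    Complex.pos_iff.mp (pos_of_mem_spectrum_of_posDef_mul hA.map_algebraMap hKℂ hμ)
  exact ⟨him.symm, hre⟩
end

section
/- The polynomial stability function G(z) = 1 + z + z²/2 satisfies: for z = −λ·(1 − e^{−iθ}) with λ > 0 (upwind symbol), |G(z)| ≤ 1 for all θ ∈ ℝ if and only if λ ≤ 1. -/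
/-!
Write `x = Re z`. For any `z`, `|1 + z + z²/2|² = 1 + 2x + 2x² + |z|² x + |z|⁴/4`, and on the
upwind symbol `z = -λ(1 - e^{-iθ})` one has `|z|² = -2λx` with `x = -λ(1 - cos θ) ∈ [-2λ, 0]`.
Hence `|G(z)|² - 1 = x (2 + (λ² - 2λ + 2) x)`, which is `≤ 0` on all of `[-2λ, 0]` exactly when it
is `≤ 0` at the endpoint `x = -2λ` (i.e. `θ = π`), i.e. when
`λ(λ² - 2λ + 2) - 1 = (λ - 1)(λ² - λ + 1) ≤ 0`.
-/

open Complex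

noncomputable section

def stabilityFunction (z : ℂ) : ℂ := 1 + z + z ^ 2 / 2

def upwindSymbol (lam θ : ℝ) : ℂ := -(lam : ℂ) * (1 - exp (-(θ : ℂ) * I))

theorem normSq_stabilityFunction (z : ℂ) :
    normSq (stabilityFunction z) =
      1 + 2 * z.re + 2 * z.re ^ 2 + normSq z * z.re + normSq z ^ 2 / 4 := by
  simp only [stabilityFunction, normSq_apply, add_re, add_im, one_re, one_im, div_re, div_im,
    pow_two, mul_re, mul_im, re_ofNat, im_ofNat]
  norm_num
  ring

theorem exp_neg_mul_I (θ : ℝ) :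
    exp (-(θ : ℂ) * I) = (Real.cos θ : ℂ) - (Real.sin θ : ℂ) * I := by
  rw [← ofReal_neg, exp_mul_I, ← ofReal_cos, ← ofReal_sin, Real.cos_neg, Real.sin_neg,
    ofReal_neg, neg_mul, sub_eq_add_neg]

theorem upwindSymbol_re (lam θ : ℝ) : (upwindSymbol lam θ).re = -lam * (1 - Real.cos θ) := by
  rw [upwindSymbol, exp_neg_mul_I]
  simp [cos_ofReal_re, sin_ofReal_re]

theorem upwindSymbol_im (lam θ : ℝ) : (upwindSymbol lam θ).im = -lam * Real.sin θ := by
  rw [upwindSymbol, exp_neg_mul_I]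
  simp [cos_ofReal_re, sin_ofReal_re]

theorem normSq_upwindSymbol (lam θ : ℝ) :
    normSq (upwindSymbol lam θ) = -2 * lam * (upwindSymbol lam θ).re := by
  rw [normSq_apply, upwindSymbol_re, upwindSymbol_im]
  linear_combination lam ^ 2 * Real.sin_sq_add_cos_sq θ

theorem normSq_stabilityFunction_upwindSymbol_sub_one (lam θ : ℝ) :
    normSq (stabilityFunction (upwindSymbol lam θ)) - 1 =
      (upwindSymbol lam θ).re * (2 + (lam ^ 2 - 2 * lam + 2) * (upwindSymbol lam θ).re) := by
  rw [normSq_stabilityFunction, normSq_upwindSymbol]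
  ring

theorem mul_sq_sub_two_mul_add_two_le_one_iff (lam : ℝ) :
    lam * (lam ^ 2 - 2 * lam + 2) ≤ 1 ↔ lam ≤ 1 := by
  have hfactor : lam * (lam ^ 2 - 2 * lam + 2) - 1 = (lam - 1) * (lam ^ 2 - lam + 1) := by ring
  have hpos : 0 < lam ^ 2 - lam + 1 := by nlinarith [sq_nonneg (lam - 1 / 2)]
  rw [← sub_nonpos, hfactor, ← zero_mul (lam ^ 2 - lam + 1), mul_le_mul_iff_of_pos_right hpos,
    sub_nonpos]

end

/-- The DeC stability function `G(z) = 1 + z + z²/2` combined with the upwind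
symbol `z = -λ(1 - e^{-iθ})`, `λ > 0`, satisfies `|G(z)| ≤ 1` for all `θ` iff
`λ ≤ 1`. -/
theorem stmt17 (lam : ℝ) (hlam : 0 < lam) :
    (∀ θ : ℝ,
      ‖1 + (-(lam : ℂ) * (1 - Complex.exp (-(θ : ℂ) * Complex.I)))
        + (-(lam : ℂ) * (1 - Complex.exp (-(θ : ℂ) * Complex.I))) ^ 2 / 2‖ ≤ 1)
      ↔ lam ≤ 1 := by
  have hp : 0 < lam ^ 2 - 2 * lam + 2 := by nlinarith [sq_nonneg (lam - 1)]
  have hnorm (θ : ℝ) : ‖stabilityFunction (upwindSymbol lam θ)‖ ≤ 1 ↔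
      -lam * (1 - Real.cos θ) * (2 + (lam ^ 2 - 2 * lam + 2) * (-lam * (1 - Real.cos θ))) ≤ 0 := by
    rw [← sq_le_one_iff₀ (norm_nonneg _), ← normSq_eq_norm_sq, ← sub_nonpos,
      normSq_stabilityFunction_upwindSymbol_sub_one, upwindSymbol_re]
  refine ⟨fun h => ?_, fun hle θ => ?_⟩
  · have hπ := (hnorm Real.pi).mp (h Real.pi)
    rw [Real.cos_pi] at hπ
    rw [← mul_sq_sub_two_mul_add_two_le_one_iff]
    nlinarith
  · have hcos : 0 ≤ 1 - Real.cos θ := by linarith [Real.cos_le_one θ]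
    have hcos' : 1 - Real.cos θ ≤ 2 := by linarith [Real.neg_one_le_cos θ]
    have hbound := (mul_sq_sub_two_mul_add_two_le_one_iff lam).mpr hle
    refine (hnorm θ).mpr (mul_nonpos_of_nonpos_of_nonneg (by nlinarith) ?_)
    nlinarith [mul_pos hlam hp]
end
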